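/- Let λ, β ∈ (0,1) with β < 1/(2−λ), p = 2λβ(1−λ), q = 2λ(1−β) (so p < q). Suppose y_j ∈ (0,1] for j ∈ S, y_k ∈ [−1,0) for k ∉ S, W row-stochastic, and for a given i ∈ S: (1−2λ)/(1−λ) < Σ_{j∈S} w_{ij} < (1/2)(1 + p/(p−q)). Then the anti-coordination discriminant δ_i = p·[Σ_{j∈S} w_{ij} y_j + Σ_{k∉S} w_{ik} y_k] − (q/2)·[Σ_{j∈S} w_{ij} − Σ_{k∉S} w_{ik}] satisfies δ_i > 0. -/

import Mathlib

/-!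
Since `y ≥ 0` on `S` and `y ≥ -1` off `S`, with `s = ∑_{j ∈ S} w j` the discriminant is at least
`(p - q) s - p + q / 2`. Multiplying the upper threshold on `s` by `p - q < 0` makes this positive.
-/

open Finset

lemma neg_sum_le_sum_mul_of_neg_one_le {ι : Type*} {w y : ι → ℝ} {T : Finset ι}
    (hw : ∀ k ∈ T, 0 ≤ w k) (hy : ∀ k ∈ T, -1 ≤ y k) :
    -∑ k ∈ T, w k ≤ ∑ k ∈ T, w k * y k := by
  rw [← sum_neg_distrib]
  exact sum_le_sum fun k hk => by nlinarith [hw k hk, hy k hk]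

lemma neg_sum_compl_le_sum_mul_add_sum_compl_mul {ι : Type*} [Fintype ι] [DecidableEq ι]
    {w y : ι → ℝ} {S : Finset ι} (hw : ∀ j, 0 ≤ w j)
    (hyS : ∀ j ∈ S, 0 ≤ y j) (hyNS : ∀ k ∉ S, -1 ≤ y k) :
    -∑ k ∈ Sᶜ, w k ≤ ∑ j ∈ S, w j * y j + ∑ k ∈ Sᶜ, w k * y k := by
  have hS : 0 ≤ ∑ j ∈ S, w j * y j :=
    sum_nonneg fun j hj => mul_nonneg (hw j) (hyS j hj)
  have hSc : -∑ k ∈ Sᶜ, w k ≤ ∑ k ∈ Sᶜ, w k * y k :=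
    neg_sum_le_sum_mul_of_neg_one_le (fun k _ => hw k) fun k hk => hyNS k (mem_compl.mp hk)
  linarith

/-- With `p = 2λβ(1-λ)` and `q = 2λ(1-β)`, the condition `p < q` is `β (2 - λ) < 1`. -/
lemma two_mul_mul_mul_one_sub_lt_of_lt_one_div {lam β : ℝ} (hl0 : 0 < lam) (hl2 : lam < 2)
    (hbl : β < 1 / (2 - lam)) :
    2 * lam * β * (1 - lam) < 2 * lam * (1 - β) := by
  have hβ2 : β * (2 - lam) < 1 := (lt_div_iff₀ (by linarith)).mp hbl
  nlinarith

lemma discriminant_pos_of_lt_half_one_add_div {p q s x : ℝ} (hp : 0 ≤ p) (hpq : p < q)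
    (hs : s < 1 / 2 * (1 + p / (p - q))) (hx : -(1 - s) ≤ x) :
    0 < p * x - q / 2 * (s - (1 - s)) := by
  have hpq' : p - q < 0 := sub_neg.mpr hpq
  have hkey : p - q / 2 < (p - q) * s := by
    have h := mul_lt_mul_of_neg_left hs hpq'
    have heq : (p - q) * (1 / 2 * (1 + p / (p - q))) = p - q / 2 := by
      field_simp [hpq'.ne]
      ring
    linarith
  nlinarith [mul_le_mul_of_nonneg_left hx hp]

theorem anticoordination_discriminant_pos_in_S_general
    (n : ℕ) (w : Fin n → ℝ) (y : Fin n → ℝ) (S : Finset (Fin n)) (lam β : ℝ)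
    (hlam : lam ∈ Set.Ioo (0 : ℝ) 1) (hβ : β ∈ Set.Ioo (0 : ℝ) 1)
    (hbl : β < 1 / (2 - lam))
    (hw : ∀ j, 0 ≤ w j) (hwsum : ∑ j, w j = 1)
    (hyS : ∀ j ∈ S, y j ∈ Set.Ioc (0 : ℝ) 1)
    (hyNS : ∀ k ∉ S, y k ∈ Set.Ico (-1 : ℝ) 0)
    (hhi : ∑ j ∈ S, w j < (1 / 2) * (1 + (2 * lam * β * (1 - lam)) /
      (2 * lam * β * (1 - lam) - 2 * lam * (1 - β)))) :
    0 < (2 * lam * β * (1 - lam)) *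
          (∑ j ∈ S, w j * y j + ∑ k ∈ Sᶜ, w k * y k)
        - (2 * lam * (1 - β) / 2) * (∑ j ∈ S, w j - ∑ k ∈ Sᶜ, w k) := by
  obtain ⟨hl0, hl1⟩ := hlam
  have hsc : ∑ k ∈ Sᶜ, w k = 1 - ∑ j ∈ S, w j := by
    rw [← hwsum, ← sum_add_sum_compl S w]
    ring
  have hp : 0 ≤ 2 * lam * β * (1 - lam) := by
    have := hβ.1
    have : 0 < 1 - lam := by linarith
    positivity
  have hlower := neg_sum_compl_le_sum_mul_add_sum_compl_mul hw
    (fun j hj => (hyS j hj).1.le) fun k hk => (hyNS k hk).1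
  rw [hsc] at hlower ⊢
  exact discriminant_pos_of_lt_half_one_add_div hp
    (two_mul_mul_mul_one_sub_lt_of_lt_one_div hl0 (by linarith) hbl) hhi hlower

/-- Anti-coordination discriminant of an agent `i ∈ S` is
strictly positive under the polarization-invariance condition. -/
theorem anticoordination_discriminant_pos_in_S
    (n : ℕ) (w : Fin n → ℝ) (y : Fin n → ℝ) (S : Finset (Fin n)) (lam β : ℝ)
    (hlam : lam ∈ Set.Ioo (0 : ℝ) 1) (hβ : β ∈ Set.Ioo (0 : ℝ) 1)
    (hbl : β < 1 / (2 - lam))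
    (hw : ∀ j, 0 ≤ w j) (hwsum : ∑ j, w j = 1)
    (hyS : ∀ j ∈ S, y j ∈ Set.Ioc (0 : ℝ) 1)
    (hyNS : ∀ k ∉ S, y k ∈ Set.Ico (-1 : ℝ) 0)
    (hlo : (1 - 2 * lam) / (1 - lam) < ∑ j ∈ S, w j)
    (hhi : ∑ j ∈ S, w j < (1 / 2) * (1 + (2 * lam * β * (1 - lam)) /
      (2 * lam * β * (1 - lam) - 2 * lam * (1 - β)))) :
    0 < (2 * lam * β * (1 - lam)) *
          (∑ j ∈ S, w j * y j + ∑ k ∈ Sᶜ, w k * y k)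
        - (2 * lam * (1 - β) / 2) * (∑ j ∈ S, w j - ∑ k ∈ Sᶜ, w k) :=
  anticoordination_discriminant_pos_in_S_general n w y S lam β hlam hβ hbl hw hwsum hyS hyNS hhi
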